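/- For positive definite A and B, the squared Bures-Wasserstein distance is nonnegative: tr(A) + tr(B) ≥ 2 tr((A^{1/2}BA^{1/2})^{1/2}), with equality if and only if A = B. -/

import Mathlib

open Matrix Filter Asymptotics
open scoped ComplexOrder

/-- The PSD square root of a matrix (0 if not PSD). -/
noncomputable def msqrt {n : ℕ} (M : Matrix (Fin n) (Fin n) ℂ) : Matrix (Fin n) (Fin n) ℂ :=
  letI := Classical.propDecidable M.PosSemidef
  if h : M.PosSemidef then (h.1.eigenvectorUnitary : Matrix (Fin n) (Fin n) ℂ) *
    diagonal ((↑) ∘ (√·) ∘ h.1.eigenvalues) * (star h.1.eigenvectorUnitary : Matrix (Fin n) (Fin n) ℂ) else 0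

/-- `(AB)^{1/2} := A^{1/2} (A^{1/2} B A^{1/2})^{1/2} A^{-1/2}`. -/
noncomputable def sqAB {n : ℕ} (A B : Matrix (Fin n) (Fin n) ℂ) : Matrix (Fin n) (Fin n) ℂ :=
  msqrt A * msqrt (msqrt A * B * msqrt A) * (msqrt A)⁻¹

/-- Bures-Wasserstein geodesic `A ◇_t B`. -/
noncomputable def geo {n : ℕ} (A B : Matrix (Fin n) (Fin n) ℂ) (t : ℝ) : Matrix (Fin n) (Fin n) ℂ :=
  ((1 - t)^2 : ℝ) • A + (t^2 : ℝ) • B + (t * (1 - t) : ℝ) • (sqAB A B + (sqAB A B)ᴴ)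

/-- Bures-Wasserstein distance. -/
noncomputable def dBW {n : ℕ} (A B : Matrix (Fin n) (Fin n) ℂ) : ℝ :=
  Real.sqrt ((Matrix.trace A).re + (Matrix.trace B).re -
    2 * (Matrix.trace (msqrt (msqrt A * B * msqrt A))).re)

/-!
Write `S = A^{1/2}`, `R = B^{1/2}` and `C = (S B S)^{1/2}`. Since `(R S)ᴴ (R S) = C²` with `C`
invertible, `U = R S C⁻¹` is unitary and `Uᴴ R S = C` (polar decomposition of `R S`). Expanding
gives `tr A + tr B - 2 Re tr C = ‖S - R U‖²_F ≥ 0`, and equality forces `S = R U`, whence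
`A = S Sᴴ = R U Uᴴ R = B`.
-/

open scoped MatrixOrder

lemma msqrt_eq_cfcSqrt {n : ℕ} {M : Matrix (Fin n) (Fin n) ℂ} (hM : M.PosSemidef) :
    msqrt M = CFC.sqrt M := by
  rw [msqrt, dif_pos hM, CFC.sqrt_eq_cfc, cfc_nnreal_eq_real _ M, hM.1.cfc_eq, IsHermitian.cfc,
    Unitary.conjStarAlgAut_apply]
  congr 3
  funext i
  simp [max_eq_left (hM.eigenvalues_nonneg i)]

namespace Matrix

variable {m n 𝕜 : Type*} [Fintype m] [Fintype n] [RCLike 𝕜]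

lemma re_trace_conjTranspose_mul_self_nonneg (D : Matrix m n 𝕜) :
    0 ≤ RCLike.re (Dᴴ * D).trace :=
  RCLike.nonneg_iff.mp (posSemidef_conjTranspose_mul_self D).trace_nonneg |>.1

lemma re_trace_conjTranspose_mul_self_eq_zero_iff {D : Matrix m n 𝕜} :
    RCLike.re (Dᴴ * D).trace = 0 ↔ D = 0 := by
  rw [← trace_conjTranspose_mul_self_eq_zero_iff]
  have him := (RCLike.nonneg_iff.mp (posSemidef_conjTranspose_mul_self D).trace_nonneg).2
  exact ⟨fun hre => RCLike.ext (by simpa using hre) (by simpa using him), fun h0 => by simp [h0]⟩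

variable [DecidableEq n]

lemma conjTranspose_mul_inv_mul_self {X C : Matrix n n 𝕜} (hC : C.IsHermitian)
    (hCu : IsUnit C.det) (hXC : Xᴴ * X = C * C) : (X * C⁻¹)ᴴ * X = C := by
  rw [conjTranspose_mul, conjTranspose_nonsing_inv, hC.eq, Matrix.mul_assoc, hXC,
    ← Matrix.mul_assoc, nonsing_inv_mul _ hCu, Matrix.one_mul]

lemma mul_inv_mem_unitaryGroup {X C : Matrix n n 𝕜} (hC : C.IsHermitian)
    (hCu : IsUnit C.det) (hXC : Xᴴ * X = C * C) : X * C⁻¹ ∈ unitaryGroup n 𝕜 := by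
  rw [mem_unitaryGroup_iff', star_eq_conjTranspose, ← Matrix.mul_assoc,
    conjTranspose_mul_inv_mul_self hC hCu hXC, mul_nonsing_inv _ hCu]

lemma re_trace_conjTranspose_sub_mul_self {S R U : Matrix n n 𝕜} (hS : S.IsHermitian)
    (hR : R.IsHermitian) (hU : U ∈ unitaryGroup n 𝕜) :
    RCLike.re ((S - R * U)ᴴ * (S - R * U)).trace =
      RCLike.re (S * S).trace + RCLike.re (R * R).trace - 2 * RCLike.re (Uᴴ * R * S).trace := by
  have hcross : (S * (R * U)).trace = star (Uᴴ * R * S).trace := by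
    rw [← trace_conjTranspose, conjTranspose_mul, conjTranspose_mul, conjTranspose_conjTranspose,
      hS.eq, hR.eq]
  have hunit : (Uᴴ * R * (R * U)).trace = (R * R).trace := by
    rw [← Matrix.mul_assoc, trace_mul_comm, ← Matrix.mul_assoc, ← Matrix.mul_assoc,
      ← star_eq_conjTranspose, mem_unitaryGroup_iff.mp hU, Matrix.one_mul]
  rw [conjTranspose_sub, conjTranspose_mul, hS.eq, hR.eq]
  simp only [Matrix.sub_mul, Matrix.mul_sub, trace_sub, map_sub, hcross, hunit, RCLike.star_def,
    RCLike.conj_re]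
  ring

namespace PosDef

variable {A B : Matrix n n 𝕜}

lemma cfcSqrt_mul_mul_cfcSqrt (hA : A.PosDef) (hB : B.PosDef) :
    (CFC.sqrt A * B * CFC.sqrt A).PosDef := by
  have hS : IsUnit (CFC.sqrt A) := IsStrictlyPositive.isUnit_cfcSqrt A hA.isStrictlyPositive
  rw [← isStrictlyPositive_iff_posDef]
  nth_rw 1 [← (CFC.sqrt_nonneg A).isSelfAdjoint.star_eq]
  exact hS.isStrictlyPositive_star_left_conjugate_iff.mpr hB.isStrictlyPositive

lemma exists_re_trace_sub_two_mul_re_trace_sqrt_eq (hA : A.PosDef) (hB : B.PosDef) :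
    ∃ D : Matrix n n 𝕜, RCLike.re A.trace + RCLike.re B.trace -
        2 * RCLike.re (CFC.sqrt (CFC.sqrt A * B * CFC.sqrt A)).trace = RCLike.re (Dᴴ * D).trace ∧
      (D = 0 → A = B) := by
  set S := CFC.sqrt A
  set R := CFC.sqrt B
  set C := CFC.sqrt (S * B * S)
  have hS : S.IsHermitian := (CFC.sqrt_nonneg A).posSemidef.isHermitian
  have hR : R.IsHermitian := (CFC.sqrt_nonneg B).posSemidef.isHermitian
  have hC : C.IsHermitian := (CFC.sqrt_nonneg _).posSemidef.isHermitian
  have hSS : S * S = A := CFC.sqrt_mul_sqrt_self A hA.posSemidef.nonneg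
  have hRR : R * R = B := CFC.sqrt_mul_sqrt_self B hB.posSemidef.nonneg
  have hCu : IsUnit C.det := (isUnit_iff_isUnit_det C).mp <|
    IsStrictlyPositive.isUnit_cfcSqrt _ (hA.cfcSqrt_mul_mul_cfcSqrt hB).isStrictlyPositive
  have hXC : (R * S)ᴴ * (R * S) = C * C := by
    rw [CFC.sqrt_mul_sqrt_self _ (hA.cfcSqrt_mul_mul_cfcSqrt hB).posSemidef.nonneg,
      conjTranspose_mul, hS.eq, hR.eq, Matrix.mul_assoc, ← Matrix.mul_assoc R, hRR,
      Matrix.mul_assoc]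
  set U := R * S * C⁻¹
  have hU : U ∈ unitaryGroup n 𝕜 := mul_inv_mem_unitaryGroup hC hCu hXC
  have hUC : Uᴴ * R * S = C := by
    rw [Matrix.mul_assoc]
    exact conjTranspose_mul_inv_mul_self hC hCu hXC
  refine ⟨S - R * U, ?_, fun hD => ?_⟩
  · rw [re_trace_conjTranspose_sub_mul_self hS hR hU, hUC, hSS, hRR]
  · have hSRU : S = R * U := sub_eq_zero.mp hD
    calc A = S * Sᴴ := by rw [hS.eq, hSS]
      _ = R * (U * star U) * R := by
        rw [hSRU, conjTranspose_mul, hR.eq, star_eq_conjTranspose]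
        simp only [Matrix.mul_assoc]
      _ = B := by rw [mem_unitaryGroup_iff.mp hU, Matrix.mul_one, hRR]

lemma two_mul_re_trace_sqrt_le (hA : A.PosDef) (hB : B.PosDef) :
    2 * RCLike.re (CFC.sqrt (CFC.sqrt A * B * CFC.sqrt A)).trace ≤
      RCLike.re A.trace + RCLike.re B.trace := by
  obtain ⟨D, hD, -⟩ := exists_re_trace_sub_two_mul_re_trace_sqrt_eq hA hB
  linarith [re_trace_conjTranspose_mul_self_nonneg D]

lemma re_trace_add_eq_two_mul_re_trace_sqrt_iff (hA : A.PosDef) (hB : B.PosDef) :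
    RCLike.re A.trace + RCLike.re B.trace =
      2 * RCLike.re (CFC.sqrt (CFC.sqrt A * B * CFC.sqrt A)).trace ↔ A = B := by
  constructor
  · obtain ⟨D, hD, hAB⟩ := exists_re_trace_sub_two_mul_re_trace_sqrt_eq hA hB
    exact fun h => hAB (re_trace_conjTranspose_mul_self_eq_zero_iff.mp (by linarith))
  · rintro rfl
    set S := CFC.sqrt A
    have hSS : S * S = A := CFC.sqrt_mul_sqrt_self A hA.posSemidef.nonneg
    have hsq : A * A = S * A * S := by
      calc A * A = S * S * (S * S) := by rw [hSS]
        _ = S * (S * S) * S := by simp only [Matrix.mul_assoc]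
        _ = S * A * S := by rw [hSS]
    rw [CFC.sqrt_unique hsq hA.posSemidef.nonneg]
    ring

end PosDef

end Matrix

theorem stmt17 {n : ℕ} (A B : Matrix (Fin n) (Fin n) ℂ)
    (hA : A.PosDef) (hB : B.PosDef) :
    2 * (Matrix.trace (msqrt (msqrt A * B * msqrt A))).re ≤
        (Matrix.trace A).re + (Matrix.trace B).re ∧
    ((Matrix.trace A).re + (Matrix.trace B).re =
        2 * (Matrix.trace (msqrt (msqrt A * B * msqrt A))).re ↔ A = B) := by
  rw [msqrt_eq_cfcSqrt hA.posSemidef,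
    msqrt_eq_cfcSqrt (hA.cfcSqrt_mul_mul_cfcSqrt hB).posSemidef]
  exact ⟨hA.two_mul_re_trace_sqrt_le hB, hA.re_trace_add_eq_two_mul_re_trace_sqrt_iff hB⟩
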